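/- arXiv:2208.09722 — 8 statements merged into one kernel-verified Lean document; each statement's English description precedes it below -/
import Mathlib

section
/- For every nonempty set S, there exists a good S-predictor on ℝ; that is, a function P assigning to each t ∈ ℝ and each f : (-∞,t) → S a value P(f) ∈ S, such that for every total function F : ℝ → S, the set {t ∈ ℝ : P(F restricted to (-∞,t)) ≠ F(t)} has Lebesgue measure zero. -/
/-!
Well-order `ℝ → S` and predict at time `t` the value at `t` of the least function that agrees
with `F` on `(-∞, t)`. If the prediction fails at `s < t`, the least candidate at time `t` is
strictly larger than the one at time `s`, so the set of failures is well-ordered by the order of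
`ℝ`. A well-ordered subset of `ℝ` is countable, as each of its points is followed by an open
gap before its successor, hence Lebesgue-null.
-/

open MeasureTheory Set

theorem Set.IsWF.countable {α : Type*} [LinearOrder α] [NoMaxOrder α] [TopologicalSpace α]
    [OrderTopology α] [SecondCountableTopology α] {T : Set α} (hT : T.IsWF) : T.Countable := by
  refine (countable_image_lt_image_Ioi_within T id).mono fun x hx => ?_
  refine ⟨hx, ?_⟩
  by_cases hlater : (T ∩ Ioi x).Nonempty
  · have hwf : (T ∩ Ioi x).IsWF := hT.mono inter_subset_left
    exact ⟨hwf.min hlater, (hwf.min_mem hlater).2, fun y hy hxy => hwf.min_le hlater ⟨hy, hxy⟩⟩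
  · obtain ⟨z, hz⟩ := exists_gt x
    exact ⟨z, hz, fun y hy hxy => absurd ⟨y, hy, hxy⟩ hlater⟩

section BestGuess

variable {ι S : Type*} [Preorder ι]

noncomputable def bestGuess (t : ι) (F : ι → S) : ι → S :=
  WellOrderingRel.isWellOrder.wf.min {G | EqOn G F (Iio t)} ⟨F, eqOn_refl F _⟩

theorem bestGuess_eqOn (t : ι) (F : ι → S) : EqOn (bestGuess t F) F (Iio t) :=
  WellOrderingRel.isWellOrder.wf.min_mem {G | EqOn G F (Iio t)} ⟨F, eqOn_refl F _⟩

theorem not_wellOrderingRel_bestGuess {t : ι} {F G : ι → S} (hG : EqOn G F (Iio t)) :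
    ¬ WellOrderingRel G (bestGuess t F) :=
  WellOrderingRel.isWellOrder.wf.not_lt_min {G | EqOn G F (Iio t)} hG

theorem bestGuess_congr {t : ι} {F G : ι → S} (h : EqOn F G (Iio t)) :
    bestGuess t F = bestGuess t G := by
  have : {H : ι → S | EqOn H F (Iio t)} = {H | EqOn H G (Iio t)} :=
    ext fun H => ⟨fun hH => hH.trans h, fun hH => hH.trans h.symm⟩
  unfold bestGuess
  congr 1

theorem wellOrderingRel_bestGuess {F : ι → S} {s t : ι} (hs : bestGuess s F s ≠ F s)
    (hst : s < t) : WellOrderingRel (bestGuess s F) (bestGuess t F) := by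
  have hne : bestGuess s F ≠ bestGuess t F := fun h => hs (h ▸ bestGuess_eqOn t F hst)
  have hnot : ¬ WellOrderingRel (bestGuess t F) (bestGuess s F) :=
    not_wellOrderingRel_bestGuess fun x hx => bestGuess_eqOn t F (hx.trans hst)
  exact (trichotomous_of WellOrderingRel _ _).resolve_right (not_or_intro hne hnot)

theorem isWF_setOf_bestGuess_ne (F : ι → S) : {t | bestGuess t F t ≠ F t}.IsWF :=
  (InvImage.wf (bestGuess · F) WellOrderingRel.isWellOrder.wf).wellFoundedOn.mono'
    fun _ hs _ _ hst => wellOrderingRel_bestGuess hs hst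

end BestGuess

/-- `P t F` encodes the prediction made from the restriction of `F` to `(-∞, t)`, whence the
requirement that `P t` depend only on the values on `Iio t`. -/
theorem stmt_0_general (S : Type*) :
    ∃ P : ℝ → (ℝ → S) → S,
      (∀ (t : ℝ) (F G : ℝ → S), Set.EqOn F G (Set.Iio t) → P t F = P t G) ∧
      (∀ F : ℝ → S, volume {t : ℝ | P t F ≠ F t} = 0) :=
  ⟨fun t F => bestGuess t F t, fun t _ _ h => congrFun (bestGuess_congr h) t,
    fun F => (isWF_setOf_bestGuess_ne F).countable.measure_zero volume⟩

/-- **Hardin–Taylor**: for every (nonempty) set `S` there is a good `S`-predictor on `ℝ`.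
An `S`-predictor is encoded as `P : ℝ → (ℝ → S) → S`, where `P t F` stands for the
prediction made from the restriction of `F` to `(-∞, t)`; accordingly we require that
`P t` depends only on values on `Iio t`.  Goodness: for every total `F : ℝ → S`, the set
of times where the prediction is wrong has Lebesgue measure zero. -/
theorem stmt_0 (S : Type*) [Nonempty S] :
    ∃ P : ℝ → (ℝ → S) → S,
      (∀ (t : ℝ) (F G : ℝ → S), Set.EqOn F G (Set.Iio t) → P t F = P t G) ∧
      (∀ F : ℝ → S, volume {t : ℝ | P t F ≠ F t} = 0) :=
  stmt_0_general S
end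

section
/- Every Archimedean ordered group is abelian. That is, if (G,·,<) is a group with a linear order < that is both left and right invariant (a < b implies ca < cb and ac < bc for all a,b,c ∈ G) and Archimedean (whenever 1 < a < b there is n ∈ ℕ with b < aⁿ), then G is commutative. -/
section HolderAux

variable {G : Type*} [Group G] [LinearOrder G]

/-- left multiplication is monotone (≤ version). -/
lemma holder_hleft' (hleft : ∀ a b c : G, a < b → c * a < c * b)
    (a b c : G) (h : a ≤ b) : c * a ≤ c * b := by
  rcases h.lt_or_eq with h | h
  · exact (hleft a b c h).le
  · rw [h]

/-- right multiplication is monotone (≤ version). -/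
lemma holder_hright' (hright : ∀ a b c : G, a < b → a * c < b * c)
    (a b c : G) (h : a ≤ b) : a * c ≤ b * c := by
  rcases h.lt_or_eq with h | h
  · exact (hright a b c h).le
  · rw [h]

lemma holder_mul_le (hleft : ∀ a b c : G, a < b → c * a < c * b)
    (hright : ∀ a b c : G, a < b → a * c < b * c)
    {a b c d : G} (h1 : a ≤ b) (h2 : c ≤ d) : a * c ≤ b * d :=
  (holder_hleft' hleft c d a h2).trans (holder_hright' hright a b d h1)

lemma holder_pow_le (hleft : ∀ a b c : G, a < b → c * a < c * b)
    (hright : ∀ a b c : G, a < b → a * c < b * c)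
    {a b : G} (h : a ≤ b) : ∀ n : ℕ, a ^ n ≤ b ^ n := by
  intro n
  induction n with
  | zero => simp
  | succ n ih =>
    rw [pow_succ, pow_succ]
    exact holder_mul_le hleft hright ih h

/-- `(a*b)^(n+1) = a * ((b*a)^n * b)`. -/
lemma holder_pow_id (a b : G) : ∀ n : ℕ, (a * b) ^ (n + 1) = a * ((b * a) ^ n * b) := by
  intro n
  induction n with
  | zero => simp
  | succ n ih =>
    calc (a * b) ^ (n + 2) = (a * b) * (a * b) ^ (n + 1) := by rw [pow_succ']
    _ = (a * b) * (a * ((b * a) ^ n * b)) := by rw [ih]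
    _ = a * ((b * a) * (b * a) ^ n * b) := by simp [mul_assoc]
    _ = a * ((b * a) ^ (n + 1) * b) := by rw [pow_succ']

/-- key lemma: if `a*b ≤ b*a` then `a^n * b^n ≤ (a*b)^n`. -/
lemma holder_lemA (hleft : ∀ a b c : G, a < b → c * a < c * b)
    (hright : ∀ a b c : G, a < b → a * c < b * c)
    {a b : G} (h : a * b ≤ b * a) : ∀ n : ℕ, a ^ n * b ^ n ≤ (a * b) ^ n := by
  intro n
  induction n with
  | zero => simp
  | succ n ih =>
    have h1 : (a * b) ^ n ≤ (b * a) ^ n := holder_pow_le hleft hright h n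
    calc a ^ (n + 1) * b ^ (n + 1) = a * (a ^ n * b ^ n * b) := by
          rw [pow_succ', pow_succ]; group
    _ ≤ a * ((a * b) ^ n * b) := by
          exact holder_hleft' hleft _ _ a (holder_hright' hright _ _ b ih)
    _ ≤ a * ((b * a) ^ n * b) :=
          holder_hleft' hleft _ _ a (holder_hright' hright _ _ b h1)
    _ = (a * b) ^ (n + 1) := (holder_pow_id a b n).symm

/-- key lemma: if `a*b ≤ b*a` then `(b*a)^n ≤ b^n * a^n`. -/
lemma holder_lemA' (hleft : ∀ a b c : G, a < b → c * a < c * b)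
    (hright : ∀ a b c : G, a < b → a * c < b * c)
    {a b : G} (h : a * b ≤ b * a) : ∀ n : ℕ, (b * a) ^ n ≤ b ^ n * a ^ n := by
  intro n
  induction n with
  | zero => simp
  | succ n ih =>
    have h1 : (a * b) ^ n ≤ (b * a) ^ n := holder_pow_le hleft hright h n
    calc (b * a) ^ (n + 1) = b * ((a * b) ^ n * a) := holder_pow_id b a n
    _ ≤ b * ((b * a) ^ n * a) :=
          holder_hleft' hleft _ _ b (holder_hright' hright _ _ a h1)
    _ ≤ b * (b ^ n * a ^ n * a) :=
          holder_hleft' hleft _ _ b (holder_hright' hright _ _ a ih)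
    _ = b ^ (n + 1) * a ^ (n + 1) := by rw [pow_succ', pow_succ]; group

lemma holder_one_lt_pow (hleft : ∀ a b c : G, a < b → c * a < c * b)
    {a : G} (ha : 1 < a) (n : ℕ) : a ^ n < a ^ (n + 1) := by
  have := hleft 1 a (a ^ n) ha
  rwa [mul_one, ← pow_succ] at this

/-- extended Archimedean property: powers of any `u > 1` are cofinal. -/
lemma holder_arch (hleft : ∀ a b c : G, a < b → c * a < c * b)
    (harch : ∀ a b : G, 1 < a → a < b → ∃ n : ℕ, b < a ^ n)
    {u v : G} (hu : 1 < u) (hv : 1 < v) : ∃ m : ℕ, v < u ^ m := by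
  rcases lt_trichotomy v u with h | h | h
  · exact ⟨1, by rwa [pow_one]⟩
  · refine ⟨2, ?_⟩
    have h2 : u ^ 1 < u ^ 2 := holder_one_lt_pow hleft hu 1
    rw [pow_one] at h2
    exact h ▸ h2
  · exact harch u v hu h

/-- floor: for `a, b > 1` and any `m`, there is `k` with `a^k ≤ b^m < a^(k+1)`. -/
lemma holder_floor (hleft : ∀ a b c : G, a < b → c * a < c * b)
    (hright : ∀ a b c : G, a < b → a * c < b * c)
    (harch : ∀ a b : G, 1 < a → a < b → ∃ n : ℕ, b < a ^ n)
    {a b : G} (ha : 1 < a) (hb : 1 < b) (m : ℕ) :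
    ∃ k : ℕ, a ^ k ≤ b ^ m ∧ b ^ m < a ^ (k + 1) := by
  have hbm : 1 ≤ b ^ m := by
    have := holder_pow_le hleft hright hb.le m
    simpa using this
  have hP : ∃ M : ℕ, b ^ m < a ^ (M + 1) := by
    rcases lt_or_ge (b ^ m) a with h | h
    · exact ⟨0, by rwa [pow_one]⟩
    · have hbm1 : 1 < b ^ m := lt_of_lt_of_le ha h
      obtain ⟨M, hM⟩ := holder_arch hleft harch ha hbm1
      exact ⟨M, hM.trans (holder_one_lt_pow hleft ha M)⟩
  classical
  let K := Nat.find hP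
  have hK : b ^ m < a ^ (K + 1) := Nat.find_spec hP
  refine ⟨K, ?_, hK⟩
  rcases Nat.eq_zero_or_pos K with h0 | hpos
  · rw [h0, pow_zero]; exact hbm
  · have hlt : ¬ b ^ m < a ^ (K - 1 + 1) := Nat.find_min hP (by omega)
    have : K - 1 + 1 = K := by omega
    rw [this] at hlt
    exact le_of_not_gt hlt

/-- main lemma: positive elements cannot satisfy `a*b < b*a`. -/
lemma holder_key (hleft : ∀ a b c : G, a < b → c * a < c * b)
    (hright : ∀ a b c : G, a < b → a * c < b * c)
    (harch : ∀ a b : G, 1 < a → a < b → ∃ n : ℕ, b < a ^ n)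
    {a b : G} (ha : 1 < a) (hb : 1 < b) (hlt : a * b < b * a) : False := by
  set x := a * b with hx
  set y := b * a with hy
  have hxy : x < y := hlt
  -- the two "ratios"
  have ht : (1 : G) < x⁻¹ * y := by
    have := hleft x y x⁻¹ hxy
    rwa [inv_mul_cancel] at this
  have ht' : (1 : G) < y * x⁻¹ := by
    have := hright x y x⁻¹ hxy
    rwa [mul_inv_cancel] at this
  rcases le_total (x * y) (y * x) with hcase | hcase
  · -- Case 1: use t = x⁻¹ * y, with x*t = y and x*t ≤ t*x
    set t := x⁻¹ * y with htdef
    have hxt : x * t = y := by rw [htdef]; group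
    have hcomm : x * t ≤ t * x := by
      rw [hxt, htdef, mul_assoc]
      have := holder_hleft' hleft (x * y) (y * x) x⁻¹ hcase
      rwa [← mul_assoc, inv_mul_cancel, one_mul] at this
    obtain ⟨m, hm⟩ := holder_arch hleft harch ht ha
    obtain ⟨k, hk1, hk2⟩ := holder_floor hleft hright harch ha hb m
    -- lower bound: a^(m+k+1) < y^m
    have hA : a ^ m * b ^ m ≤ x ^ m := holder_lemA hleft hright hlt.le m
    have low1 : a ^ m * a ^ k ≤ a ^ m * b ^ m := holder_hleft' hleft _ _ _ hk1
    have low2 : x ^ m * a < x ^ m * t ^ m := hleft _ _ _ hm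
    have low3 : x ^ m * t ^ m ≤ (x * t) ^ m := holder_lemA hleft hright hcomm m
    have low4 : a ^ m * a ^ k * a ≤ x ^ m * a :=
      holder_hright' hright _ _ a (low1.trans hA)
    have low : a ^ (m + k + 1) < y ^ m := by
      have : a ^ (m + k + 1) = a ^ m * a ^ k * a := by
        rw [pow_add, pow_add, pow_one]
      rw [this]
      calc a ^ m * a ^ k * a ≤ x ^ m * a := low4
        _ < x ^ m * t ^ m := low2
        _ ≤ (x * t) ^ m := low3
        _ = y ^ m := by rw [hxt]
    -- upper bound: y^m < a^(m+k+1)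
    have hA' : y ^ m ≤ b ^ m * a ^ m := holder_lemA' hleft hright hlt.le m
    have up : y ^ m < a ^ (m + k + 1) := by
      have h1 : b ^ m * a ^ m < a ^ (k + 1) * a ^ m := hright _ _ _ hk2
      have h2 : a ^ (k + 1) * a ^ m = a ^ (m + k + 1) := by
        rw [← pow_add, show k + 1 + m = m + k + 1 by omega]
      exact lt_of_le_of_lt hA' (h2 ▸ h1)
    exact absurd (low.trans up) (lt_irrefl _)
  · -- Case 2: use t' = y * x⁻¹, with t'*x = y and t'*x ≤ x*t'
    set t := y * x⁻¹ with htdef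
    have hxt : t * x = y := by rw [htdef]; group
    have hcomm : t * x ≤ x * t := by
      rw [hxt, htdef, ← mul_assoc]
      have := holder_hright' hright (y * x) (x * y) x⁻¹ hcase
      rwa [mul_assoc, mul_inv_cancel, mul_one] at this
    obtain ⟨m, hm⟩ := holder_arch hleft harch ht' ha
    obtain ⟨k, hk1, hk2⟩ := holder_floor hleft hright harch ha hb m
    have hA : a ^ m * b ^ m ≤ x ^ m := holder_lemA hleft hright hlt.le m
    have low1 : a ^ k * (a ^ m * b ^ m) ≤ a ^ k * x ^ m := holder_hleft' hleft _ _ _ hA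
    have low2 : a * x ^ m < t ^ m * x ^ m := hright _ _ _ hm
    have low3 : t ^ m * x ^ m ≤ (t * x) ^ m := holder_lemA hleft hright hcomm m
    have low : a ^ (m + k + 1) < y ^ m := by
      have e2 : a ^ (m + k + 1) = a * (a ^ m * a ^ k) := by
        rw [← pow_add, show m + k + 1 = 1 + (m + k) by omega, pow_add, pow_one]
      have hbk : a ^ m * a ^ k ≤ a ^ m * b ^ m := holder_hleft' hleft _ _ _ hk1
      have low0 : a * (a ^ m * a ^ k) ≤ a * (a ^ m * b ^ m) :=
        holder_hleft' hleft _ _ a hbk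
      have low0' : a * (a ^ m * b ^ m) ≤ a * x ^ m := holder_hleft' hleft _ _ a hA
      calc a ^ (m + k + 1) = a * (a ^ m * a ^ k) := e2
        _ ≤ a * (a ^ m * b ^ m) := low0
        _ ≤ a * x ^ m := low0'
        _ < t ^ m * x ^ m := low2
        _ ≤ (t * x) ^ m := low3
        _ = y ^ m := by rw [hxt]
    have hA' : y ^ m ≤ b ^ m * a ^ m := holder_lemA' hleft hright hlt.le m
    have up : y ^ m < a ^ (m + k + 1) := by
      have h1 : b ^ m * a ^ m < a ^ (k + 1) * a ^ m := hright _ _ _ hk2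
      have h2 : a ^ (k + 1) * a ^ m = a ^ (m + k + 1) := by
        rw [← pow_add, show k + 1 + m = m + k + 1 by omega]
      exact lt_of_le_of_lt hA' (h2 ▸ h1)
    exact absurd (low.trans up) (lt_irrefl _)

/-- positive elements commute. -/
lemma holder_pos_comm (hleft : ∀ a b c : G, a < b → c * a < c * b)
    (hright : ∀ a b c : G, a < b → a * c < b * c)
    (harch : ∀ a b : G, 1 < a → a < b → ∃ n : ℕ, b < a ^ n)
    {a b : G} (ha : 1 < a) (hb : 1 < b) : a * b = b * a := by
  rcases lt_trichotomy (a * b) (b * a) with h | h | h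
  · exact absurd h (fun h => holder_key hleft hright harch ha hb h)
  · exact h
  · exact absurd h (fun h => holder_key hleft hright harch hb ha h)

lemma holder_inv_comm {a b : G} (h : a * b = b * a) : a⁻¹ * b = b * a⁻¹ := by
  have : a⁻¹ * (a * b) * a⁻¹ = a⁻¹ * (b * a) * a⁻¹ := by rw [h]
  calc a⁻¹ * b = a⁻¹ * (b * a) * a⁻¹ := by group
    _ = a⁻¹ * (a * b) * a⁻¹ := this.symm
    _ = b * a⁻¹ := by group

end HolderAux

/-- **Hölder's Theorem**: every Archimedean ordered group is abelian.  Here `G` carries a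
group structure and a linear order that is left and right invariant, and the order is
Archimedean: whenever `1 < a < b` there is `n : ℕ` with `b < a ^ n`. -/
theorem stmt_7 (G : Type*) [Group G] [LinearOrder G]
    (hleft : ∀ a b c : G, a < b → c * a < c * b)
    (hright : ∀ a b c : G, a < b → a * c < b * c)
    (harch : ∀ a b : G, 1 < a → a < b → ∃ n : ℕ, b < a ^ n) :
    ∀ a b : G, a * b = b * a := by
  have hinv1 : ∀ a : G, a < 1 → 1 < a⁻¹ := by
    intro a h
    have := hleft a 1 a⁻¹ h
    rwa [inv_mul_cancel, mul_one] at this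
  -- first: any `b` commutes with any positive `a`
  have step1 : ∀ a b : G, 1 < a → a * b = b * a := by
    intro a b ha
    rcases lt_trichotomy b 1 with hb | hb | hb
    · have h := holder_pos_comm hleft hright harch (hinv1 b hb) ha
      have := holder_inv_comm h
      rw [inv_inv] at this
      exact this.symm
    · rw [hb, one_mul, mul_one]
    · exact holder_pos_comm hleft hright harch ha hb
  intro a b
  rcases lt_trichotomy a 1 with ha | ha | ha
  · have h := step1 a⁻¹ b (hinv1 a ha)
    have := holder_inv_comm h
    rw [inv_inv] at this
    exact this
  · rw [ha, one_mul, mul_one]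
  · exact step1 a b ha
end

section
/- Suppose I is an open interval of real numbers and V is a subgroup of Homeo⁺(I) that acts freely on I. Then the binary relation ≺ on V defined by φ ≺ ψ iff φ(x) < ψ(x) for all x ∈ I is a linear order on V that is left and right invariant under composition and Archimedean; consequently, V is abelian. -/
/-!
Freeness forces every nontrivial element of `V` to move all points in the same direction
(otherwise a supremum argument produces a fixed point), so comparing two elements at a single
point is already the pointwise order, and it is a bi-invariant linear order on `V`. A positive
element has unbounded orbits (the supremum of a bounded orbit would be fixed), which is the
Archimedean property.

Commutativity is Hölder's argument for an Archimedean bi-ordered group: if the commutator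
`c = a b (b a)⁻¹` were positive, approximating `a` and `b` by powers of any positive `d` gives
`c < d ^ 2`; hence no positive element lies below `c`, so `c` is the least positive element,
every element is a power of `c`, and `c = 1` after all.
-/

section Hoelder

variable {G : Type*} [Group G] [LinearOrder G] [MulLeftMono G]

theorem zpow_strictMono_of_one_lt {d : G} (hd : 1 < d) : StrictMono fun n : ℤ ↦ d ^ n :=
  strictMono_int_of_lt_succ fun n ↦ by
    simpa only [zpow_add_one] using lt_mul_of_one_lt_right' (d ^ n) hd

variable [MulRightMono G]

theorem exists_zpow_near_of_one_lt (harch : ∀ a b : G, 1 < a → ∃ n : ℕ, b < a ^ n)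
    {d : G} (hd : 1 < d) (a : G) : ∃ m : ℤ, d ^ m ≤ a ∧ a < d ^ (m + 1) := by
  obtain ⟨N, hN⟩ := harch d a hd
  obtain ⟨M, hM⟩ := harch d a⁻¹ hd
  have hbdd : ∀ m : ℤ, d ^ m ≤ a → m ≤ N := fun m hm ↦
    ((zpow_strictMono_of_one_lt hd).lt_iff_lt.mp (hm.trans_lt (by simpa using hN))).le
  have hne : ∃ m : ℤ, d ^ m ≤ a := ⟨-M, by rw [zpow_neg, zpow_natCast]; exact (inv_lt'.mp hM).le⟩
  obtain ⟨m, hm, hmax⟩ := Int.exists_greatest_of_bdd ⟨N, hbdd⟩ hne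
  exact ⟨m, hm, not_le.mp fun h ↦ by simpa using hmax (m + 1) h⟩

theorem commutator_lt_sq (harch : ∀ a b : G, 1 < a → ∃ n : ℕ, b < a ^ n)
    {d : G} (hd : 1 < d) (a b : G) : a * b * (b * a)⁻¹ < d ^ 2 := by
  obtain ⟨m, ham, hma⟩ := exists_zpow_near_of_one_lt harch hd a
  obtain ⟨n, hbn, hnb⟩ := exists_zpow_near_of_one_lt harch hd b
  have hab : a * b < d ^ (m + n + 2) := by
    calc a * b < d ^ (m + 1) * d ^ (n + 1) := mul_lt_mul_of_lt_of_le hma hnb.le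
      _ = d ^ (m + n + 2) := by rw [← zpow_add]; ring_nf
  have hba : (b * a)⁻¹ ≤ d ^ (-(m + n)) := by
    rw [zpow_neg, inv_le_inv_iff]
    calc d ^ (m + n) = d ^ n * d ^ m := by rw [← zpow_add, add_comm]
      _ ≤ b * a := mul_le_mul' hbn ham
  calc a * b * (b * a)⁻¹ < d ^ (m + n + 2) * d ^ (-(m + n)) := mul_lt_mul_of_lt_of_le hab hba
    _ = d ^ (2 : ℤ) := by rw [← zpow_add]; ring_nf
    _ = d ^ 2 := zpow_ofNat d 2

theorem IsLeast.exists_zpow_eq (harch : ∀ a b : G, 1 < a → ∃ n : ℕ, b < a ^ n) {c : G}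
    (hc : IsLeast {g : G | 1 < g} c) (g : G) : ∃ m : ℤ, c ^ m = g := by
  obtain ⟨m, hmg, hgm⟩ := exists_zpow_near_of_one_lt harch hc.1 g
  refine ⟨m, le_antisymm hmg (not_lt.mp fun hlt ↦ ?_)⟩
  have h1 : 1 < c ^ (-m) * g := by simpa [zpow_neg] using hlt
  have h2 : c ^ (-m) * g < c := by
    simpa [zpow_neg, zpow_add_one, inv_mul_lt_iff_lt_mul] using hgm
  exact (hc.2 h1).not_gt h2

theorem not_one_lt_commutator (harch : ∀ a b : G, 1 < a → ∃ n : ℕ, b < a ^ n) (a b : G) :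
    ¬ 1 < a * b * (b * a)⁻¹ := by
  set c := a * b * (b * a)⁻¹
  intro hc
  by_cases hmin : IsLeast {g : G | 1 < g} c
  · obtain ⟨m, hm⟩ := hmin.exists_zpow_eq harch a
    obtain ⟨n, hn⟩ := hmin.exists_zpow_eq harch b
    have hab : a * b = b * a := by rw [← hm, ← hn, ← zpow_add, ← zpow_add, add_comm]
    simp [c, hab] at hc
  · obtain ⟨d, hd, hdc⟩ : ∃ d, 1 < d ∧ d < c := by
      simpa [IsLeast, lowerBounds, hc] using hmin
    -- `e = min d (d⁻¹ c)` is positive with `e * e ≤ d * (d⁻¹ * c) = c`, against `c < e ^ 2`.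
    set e := min d (d⁻¹ * c)
    have he : 1 < e := lt_min hd (by simpa using hdc)
    have hee : e ^ 2 ≤ c := by
      calc e ^ 2 = e * e := sq e
        _ ≤ d * (d⁻¹ * c) := mul_le_mul' (min_le_left _ _) (min_le_right _ _)
        _ = c := mul_inv_cancel_left d c
    exact (commutator_lt_sq harch he a b).not_ge hee

theorem mul_comm_of_archimedean (harch : ∀ a b : G, 1 < a → ∃ n : ℕ, b < a ^ n) (a b : G) :
    a * b = b * a := by
  rcases lt_trichotomy (a * b * (b * a)⁻¹) 1 with h | h | h
  · refine absurd ?_ (not_one_lt_commutator harch b a)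
    simpa [mul_inv_rev] using Left.one_lt_inv_iff.mpr h
  · exact mul_inv_eq_one.mp h
  · exact absurd h (not_one_lt_commutator harch a b)

end Hoelder

open Function

section ConditionallyComplete

variable {α : Type*} [ConditionallyCompleteLinearOrder α]

theorem Monotone.exists_isFixedPt_of_le_of_le {f : α → α} (hf : Monotone f) {a b : α}
    (hab : a ≤ b) (ha : a ≤ f a) (hb : f b ≤ b) : ∃ s, IsFixedPt f s := by
  set A := {x | x ≤ b ∧ x ≤ f x}
  have haA : a ∈ A := ⟨hab, ha⟩
  have hbdd : BddAbove A := ⟨b, fun x hx ↦ hx.1⟩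
  set s := sSup A
  have hsb : s ≤ b := csSup_le ⟨a, haA⟩ fun x hx ↦ hx.1
  have hsf : s ≤ f s := csSup_le ⟨a, haA⟩ fun x hx ↦ hx.2.trans (hf (le_csSup hbdd hx))
  have hfsA : f s ∈ A := ⟨(hf hsb).trans hb, hf hsf⟩
  exact ⟨s, le_antisymm (le_csSup hbdd hfsA) hsf⟩

theorem StrictMono.perm_inv {g : Equiv.Perm α} (hg : StrictMono g) : StrictMono ⇑g⁻¹ :=
  fun x y h ↦ hg.lt_iff_lt.mp (by simpa using h)

theorem Equiv.Perm.forall_lt_apply_or_forall_apply_lt {g : Equiv.Perm α} (hg : StrictMono g)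
    (hfix : ∀ x, g x ≠ x) : (∀ x, x < g x) ∨ ∀ x, g x < x := by
  by_contra! ⟨⟨x₁, hx₁⟩, ⟨x₂, hx₂⟩⟩
  rcases le_total x₂ x₁ with h | h
  · obtain ⟨s, hs⟩ := hg.monotone.exists_isFixedPt_of_le_of_le h hx₂ hx₁
    exact hfix s hs
  · obtain ⟨s, hs⟩ := hg.perm_inv.monotone.exists_isFixedPt_of_le_of_le h
      (by simpa using hg.perm_inv.monotone hx₁) (by simpa using hg.perm_inv.monotone hx₂)
    exact hfix s (by simpa using congrArg g hs.symm)

theorem Equiv.Perm.exists_lt_pow_apply {f : Equiv.Perm α} (hf : StrictMono f)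
    (hlt : ∀ x, x < f x) (y z : α) : ∃ n : ℕ, y < (f ^ n) z := by
  by_contra! hle
  have hbdd : BddAbove (Set.range fun n : ℕ ↦ (f ^ n) z) := ⟨y, Set.forall_mem_range.mpr hle⟩
  set L := ⨆ n : ℕ, (f ^ n) z
  obtain ⟨n, hn⟩ : ∃ n : ℕ, f⁻¹ L < (f ^ n) z :=
    exists_lt_of_lt_ciSup (by simpa using hlt (f⁻¹ L))
  have : L < (f ^ (n + 1)) z := by simpa [pow_succ'] using hf hn
  exact this.not_ge (le_ciSup hbdd (n + 1))

end ConditionallyComplete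

namespace Subgroup

variable {α : Type*} [ConditionallyCompleteLinearOrder α] {V : Subgroup (Equiv.Perm α)}

theorem forall_apply_lt_or_eq_or_forall_apply_gt (hmono : ∀ φ ∈ V, StrictMono ⇑φ)
    (hfree : ∀ φ ∈ V, φ ≠ 1 → ∀ x, φ x ≠ x) {φ ψ : Equiv.Perm α} (hφ : φ ∈ V) (hψ : ψ ∈ V) :
    (∀ x, φ x < ψ x) ∨ φ = ψ ∨ ∀ x, ψ x < φ x := by
  by_cases heq : φ = ψ
  · exact Or.inr (Or.inl heq)
  have hV : ψ⁻¹ * φ ∈ V := V.mul_mem (V.inv_mem hψ) hφ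
  have hne : ψ⁻¹ * φ ≠ 1 := fun h ↦ heq (inv_mul_eq_one.mp h).symm
  have hψlt : ∀ x y, x < y ↔ ψ x < ψ y := fun x y ↦ (hmono ψ hψ).lt_iff_lt.symm
  rcases Equiv.Perm.forall_lt_apply_or_forall_apply_lt (hmono _ hV) (hfree _ hV hne) with h | h
  · exact Or.inr (Or.inr fun x ↦ by simpa [hψlt x] using h x)
  · exact Or.inl fun x ↦ by simpa [hψlt _ x] using h x

theorem forall_apply_lt_of_apply_lt (hmono : ∀ φ ∈ V, StrictMono ⇑φ)
    (hfree : ∀ φ ∈ V, φ ≠ 1 → ∀ x, φ x ≠ x) {φ ψ : Equiv.Perm α} (hφ : φ ∈ V) (hψ : ψ ∈ V)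
    {x₀ : α} (h : φ x₀ < ψ x₀) (x : α) : φ x < ψ x := by
  rcases forall_apply_lt_or_eq_or_forall_apply_gt hmono hfree hφ hψ with hlt | rfl | hgt
  · exact hlt x
  · exact absurd h (lt_irrefl _)
  · exact absurd h (hgt x₀).not_gt

theorem exists_forall_apply_lt_pow_apply [Nonempty α] (hmono : ∀ φ ∈ V, StrictMono ⇑φ)
    (hfree : ∀ φ ∈ V, φ ≠ 1 → ∀ x, φ x ≠ x) {φ ψ : Equiv.Perm α} (hφ : φ ∈ V) (hψ : ψ ∈ V)
    (hpos : ∀ x, x < φ x) : ∃ n : ℕ, ∀ x, ψ x < (φ ^ n) x := by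
  obtain ⟨x₀⟩ := ‹Nonempty α›
  obtain ⟨n, hn⟩ := Equiv.Perm.exists_lt_pow_apply (hmono φ hφ) hpos (ψ x₀) x₀
  exact ⟨n, forall_apply_lt_of_apply_lt hmono hfree hψ (V.pow_mem hφ n) hn⟩

theorem mul_comm_of_free [Nonempty α] (hmono : ∀ φ ∈ V, StrictMono ⇑φ)
    (hfree : ∀ φ ∈ V, φ ≠ 1 → ∀ x, φ x ≠ x) {φ ψ : Equiv.Perm α} (hφ : φ ∈ V) (hψ : ψ ∈ V) :
    φ * ψ = ψ * φ := by
  obtain ⟨x₀⟩ := ‹Nonempty α›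
  have hinj : Function.Injective fun χ : V ↦ (χ : Equiv.Perm α) x₀ := fun χ χ' h ↦ by
    by_contra hne
    refine hfree _ (V.mul_mem (V.inv_mem χ'.2) χ.2) ?_ x₀ ?_
    · exact fun h1 ↦ hne (Subtype.ext (inv_mul_eq_one.mp h1).symm)
    · simp [h]
  -- Comparing at one point orders `V` like the pointwise order.
  let : LinearOrder V := LinearOrder.lift' _ hinj
  have hpointwise {χ χ' : V} (h : χ < χ') (x : α) : (χ : Equiv.Perm α) x < (χ' : Equiv.Perm α) x :=
    forall_apply_lt_of_apply_lt hmono hfree χ.2 χ'.2 h x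
  have : MulLeftMono V := ⟨fun χ _ _ h ↦ (hmono χ χ.2).monotone h⟩
  have : MulRightMono V := ⟨fun χ _ _ h ↦ h.lt_or_eq.elim
    (fun hlt ↦ (hpointwise hlt (χ.1 x₀)).le) (fun heq ↦ heq ▸ le_rfl)⟩
  have harch (χ χ' : V) (hχ : 1 < χ) : ∃ n : ℕ, χ' < χ ^ n := by
    obtain ⟨n, hn⟩ := exists_forall_apply_lt_pow_apply hmono hfree χ.2 χ'.2 (hpointwise hχ)
    exact ⟨n, hn x₀⟩
  exact congrArg Subtype.val (mul_comm_of_archimedean harch ⟨φ, hφ⟩ ⟨ψ, hψ⟩)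

end Subgroup

theorem stmt_8_general (I : Set ℝ) (hIconn : I.OrdConnected) (hIne : I.Nonempty)
    (V : Subgroup (Equiv.Perm I))
    (hmono : ∀ φ ∈ V, StrictMono (⇑φ))
    (hfree : ∀ φ ∈ V, φ ≠ 1 → ∀ x : I, φ x ≠ x) :
    -- irreflexive
    (∀ φ ∈ V, ¬ ∀ x : I, φ x < φ x) ∧
    -- transitive
    (∀ φ ∈ V, ∀ ψ ∈ V, ∀ χ ∈ V,
      (∀ x : I, φ x < ψ x) → (∀ x : I, ψ x < χ x) → (∀ x : I, φ x < χ x)) ∧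
    -- trichotomy (linearity)
    (∀ φ ∈ V, ∀ ψ ∈ V, (∀ x : I, φ x < ψ x) ∨ φ = ψ ∨ (∀ x : I, ψ x < φ x)) ∧
    -- left invariance
    (∀ φ ∈ V, ∀ ψ ∈ V, ∀ χ ∈ V,
      (∀ x : I, φ x < ψ x) → ∀ x : I, (χ * φ) x < (χ * ψ) x) ∧
    -- right invariance
    (∀ φ ∈ V, ∀ ψ ∈ V, ∀ χ ∈ V,
      (∀ x : I, φ x < ψ x) → ∀ x : I, (φ * χ) x < (ψ * χ) x) ∧
    -- Archimedean
    (∀ φ ∈ V, ∀ ψ ∈ V, (∀ x : I, (1 : Equiv.Perm I) x < φ x) → (∀ x : I, φ x < ψ x) →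
      ∃ n : ℕ, ∀ x : I, ψ x < (φ ^ n) x) ∧
    -- consequently, V is abelian
    (∀ φ ∈ V, ∀ ψ ∈ V, φ * ψ = ψ * φ) := by
  have : Inhabited I := ⟨⟨_, hIne.some_mem⟩⟩
  refine ⟨fun φ _ h ↦ lt_irrefl _ (h default), fun φ _ ψ _ χ _ h h' x ↦ (h x).trans (h' x),
    fun φ hφ ψ hψ ↦ V.forall_apply_lt_or_eq_or_forall_apply_gt hmono hfree hφ hψ,
    fun φ _ ψ _ χ hχ h x ↦ hmono χ hχ (h x), fun φ _ ψ _ χ _ h x ↦ h (χ x),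
    fun φ hφ ψ hψ hpos _ ↦ V.exists_forall_apply_lt_pow_apply hmono hfree hφ hψ hpos,
    fun φ hφ ψ hψ ↦ V.mul_comm_of_free hmono hfree hφ hψ⟩

/-- If `I` is an open interval of reals (open, order-connected, nonempty subset of `ℝ`) and
`V` is a subgroup of `Homeo⁺(I)` (modelled as a subgroup of `Equiv.Perm I` consisting of
strictly monotone permutations) acting freely on `I`, then the relation
`φ ≺ ψ ↔ ∀ x ∈ I, φ x < ψ x` is a strict linear order on `V` (irreflexive, transitive,
trichotomous on `V`), is left and right invariant under composition, and is Archimedean;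
consequently `V` is abelian. -/
theorem stmt_8 (I : Set ℝ) (hIopen : IsOpen I) (hIconn : I.OrdConnected) (hIne : I.Nonempty)
    (V : Subgroup (Equiv.Perm I))
    (hmono : ∀ φ ∈ V, StrictMono (⇑φ))
    (hfree : ∀ φ ∈ V, φ ≠ 1 → ∀ x : I, φ x ≠ x) :
    -- irreflexive
    (∀ φ ∈ V, ¬ ∀ x : I, φ x < φ x) ∧
    -- transitive
    (∀ φ ∈ V, ∀ ψ ∈ V, ∀ χ ∈ V,
      (∀ x : I, φ x < ψ x) → (∀ x : I, ψ x < χ x) → (∀ x : I, φ x < χ x)) ∧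
    -- trichotomy (linearity)
    (∀ φ ∈ V, ∀ ψ ∈ V, (∀ x : I, φ x < ψ x) ∨ φ = ψ ∨ (∀ x : I, ψ x < φ x)) ∧
    -- left invariance
    (∀ φ ∈ V, ∀ ψ ∈ V, ∀ χ ∈ V,
      (∀ x : I, φ x < ψ x) → ∀ x : I, (χ * φ) x < (χ * ψ) x) ∧
    -- right invariance
    (∀ φ ∈ V, ∀ ψ ∈ V, ∀ χ ∈ V,
      (∀ x : I, φ x < ψ x) → ∀ x : I, (φ * χ) x < (ψ * χ) x) ∧
    -- Archimedean
    (∀ φ ∈ V, ∀ ψ ∈ V, (∀ x : I, (1 : Equiv.Perm I) x < φ x) → (∀ x : I, φ x < ψ x) →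
      ∃ n : ℕ, ∀ x : I, ψ x < (φ ^ n) x) ∧
    -- consequently, V is abelian
    (∀ φ ∈ V, ∀ ψ ∈ V, φ * ψ = ψ * φ) :=
  stmt_8_general I hIconn hIne V hmono hfree
end

section
/- Suppose I is an open interval of real numbers, S is a nonempty set, F : I → S, φ ∈ Homeo⁺(I), t ∈ I, and F is φ-invariant before t (i.e., F(φ(x)) = F(x) for all x ∈ I with x < t). Then there exists H : I → S such that H agrees with F on {x ∈ I : x < t} and H is fully φ-invariant (H ∘ φ = H on I). -/
/-- If `I` is an open interval of reals (open, order-connected, nonempty subset of `ℝ`),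
`S` a nonempty set, `F : I → S`, `φ ∈ Homeo⁺(I)` (a strictly monotone permutation of `I`),
`t ∈ I`, and `F` is `φ`-invariant before `t` (`F (φ x) = F x` for all `x < t` in `I`), then
there is `H : I → S` agreeing with `F` on `{x ∈ I : x < t}` which is fully `φ`-invariant. -/
theorem stmt_9 (I : Set ℝ) (hIopen : IsOpen I) (hIconn : I.OrdConnected) (hIne : I.Nonempty)
    (S : Type*) [Nonempty S] (F : I → S)
    (φ : Equiv.Perm I) (hmono : StrictMono (⇑φ))
    (t : I) (hinv : ∀ x : I, x < t → F (φ x) = F x) :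
    ∃ H : I → S, (∀ x : I, x < t → H x = F x) ∧ (∀ x : I, H (φ x) = H x) := by
  classical
  have pow_mono : ∀ m : ℕ, Monotone ⇑(φ ^ m) := by
    intro m
    induction m with
    | zero => simpa using monotone_id
    | succ n ih =>
      intro a b hab
      simpa [pow_succ, Equiv.Perm.mul_apply] using ih (hmono.monotone hab)
  have key : ∀ (y : I), y < t → ∀ m : ℕ, ((φ ^ m) y < t) → F ((φ ^ m) y) = F y := by
    intro y hy m hm
    have main : (∀ i ≤ m, (φ ^ i) y < t) → F ((φ ^ m) y) = F y := by
      intro hlt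
      have : ∀ i ≤ m, F ((φ ^ i) y) = F y := by
        intro i hi
        induction i with
        | zero => simp
        | succ n ih =>
          have h1 : (φ ^ n) y < t := hlt n (le_of_lt (Nat.lt_of_succ_le hi))
          have h2 : F ((φ ^ (n + 1)) y) = F ((φ ^ n) y) := by
            have := hinv ((φ ^ n) y) h1
            simpa [pow_succ', Equiv.Perm.mul_apply] using this
          rw [h2, ih (le_trans (Nat.le_succ n) hi)]
      exact this m le_rfl
    rcases le_total y (φ y) with hc | hc
    · have hstep : ∀ i : ℕ, (φ ^ i) y ≤ (φ ^ (i + 1)) y := by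
        intro i
        simpa [pow_succ, Equiv.Perm.mul_apply] using pow_mono i hc
      have hmono2 : Monotone fun i : ℕ => (φ ^ i) y := monotone_nat_of_le_succ hstep
      exact main (fun i hi => lt_of_le_of_lt (hmono2 hi) hm)
    · have hstep : ∀ i : ℕ, (φ ^ (i + 1)) y ≤ (φ ^ i) y := by
        intro i
        simpa [pow_succ, Equiv.Perm.mul_apply] using pow_mono i hc
      have hanti : Antitone fun i : ℕ => (φ ^ i) y := antitone_nat_of_succ_le hstep
      exact main (fun i hi => lt_of_le_of_lt (by simpa using hanti (Nat.zero_le i)) hy)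
  have zkey : ∀ (x : I) (j k : ℤ), j ≤ k → (φ ^ j) x < t → (φ ^ k) x < t →
      F ((φ ^ k) x) = F ((φ ^ j) x) := by
    intro x j k hjk hj hk
    have hm : ((k - j).toNat : ℤ) = k - j := Int.toNat_of_nonneg (sub_nonneg.mpr hjk)
    have heq : (φ ^ ((k - j).toNat)) ((φ ^ j) x) = (φ ^ k) x := by
      have : (φ ^ (((k - j).toNat : ℤ))) ((φ ^ j) x) = (φ ^ k) x := by
        rw [← Equiv.Perm.mul_apply, ← zpow_add, hm]
        norm_num
      simpa only [zpow_natCast] using this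
    rw [← heq]
    exact key _ hj _ (heq ▸ hk)
  have key2 : ∀ (x : I) (j k : ℤ), (φ ^ j) x < t → (φ ^ k) x < t →
      F ((φ ^ j) x) = F ((φ ^ k) x) := by
    intro x j k hj hk
    rcases le_total j k with h | h
    · exact (zkey x j k h hj hk).symm
    · exact zkey x k j h hk hj
  refine ⟨fun x => if h : ∃ k : ℤ, (φ ^ k) x < t then F ((φ ^ (Classical.choose h)) x)
    else Classical.arbitrary S, ?_, ?_⟩
  · intro x hx
    have h : ∃ k : ℤ, (φ ^ k) x < t := ⟨0, by simpa using hx⟩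
    simp only [dif_pos h]
    have := key2 x (Classical.choose h) 0 (Classical.choose_spec h) (by simpa using hx)
    simpa using this
  · intro x
    have shift : ∀ k : ℤ, (φ ^ k) (φ x) = (φ ^ (k + 1)) x := by
      intro k
      rw [zpow_add, zpow_one, Equiv.Perm.mul_apply]
    by_cases h : ∃ k : ℤ, (φ ^ k) x < t
    · have h' : ∃ k : ℤ, (φ ^ k) (φ x) < t := by
        obtain ⟨k, hk⟩ := h
        exact ⟨k - 1, by rw [shift]; simpa using hk⟩
      simp only [dif_pos h, dif_pos h']
      rw [shift]
      exact key2 x _ _ (by rw [← shift]; exact Classical.choose_spec h') (Classical.choose_spec h)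
    · have h' : ¬ ∃ k : ℤ, (φ ^ k) (φ x) < t := by
        rintro ⟨k, hk⟩
        exact h ⟨k + 1, by rw [← shift]; exact hk⟩
      simp only [dif_neg h, dif_neg h']
end

section
/- Suppose I is an open interval of real numbers and U is a subgroup of Homeo⁺(I) such that U acts transitively on I (for all x,y ∈ I there is φ ∈ U with φ(x) = y), the commutator subgroup [U,U] acts freely on I, and each non-identity member of U has only finitely many fixed points in I. Then each non-identity member of U has at most one fixed point in I. -/
/-!
Given fixed points `x` and `y` of `φ`, transitivity gives `ψ ∈ U` with `ψ y = x`. The commutator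
`⁅φ, ψ⁆` then fixes `x`, so by freeness it is trivial and `ψ` commutes with `φ`. Hence `ψ` maps the
finite set of fixed points of `φ` into itself; a strictly monotone map doing so fixes it pointwise,
since otherwise an orbit would be an infinite strictly monotone or antitone sequence inside it.
So `x = ψ y = y`.
-/

open Function Set

open scoped commutatorElement

theorem StrictMono.apply_eq_self_of_mapsTo_of_finite {α : Type*} [LinearOrder α] {f : α → α}
    (hf : StrictMono f) {s : Set α} (hs : s.Finite) (hmaps : MapsTo f s s) {x : α}
    (hx : x ∈ s) : f x = x := by
  by_contra hne
  have hinj : Injective fun n => f^[n] x := by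
    rcases lt_or_gt_of_ne hne with hlt | hlt
    · exact (hf.strictAnti_iterate_of_map_lt hlt).injective
    · exact (hf.strictMono_iterate_of_lt_map hlt).injective
  exact infinite_of_injective_forall_mem hinj (fun n => hmaps.iterate n hx) hs

theorem Equiv.Perm.commutatorElement_apply_eq_of_isFixedPt {α : Type*} {φ ψ : Equiv.Perm α}
    {x y : α} (hx : IsFixedPt φ x) (hy : IsFixedPt φ y) (hψ : ψ y = x) : ⁅φ, ψ⁆ x = x := by
  have hψinv : ψ⁻¹ x = y := by rw [← hψ]; exact ψ.symm_apply_apply y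
  simp only [commutatorElement_def, Equiv.Perm.mul_apply, hψinv, hy.perm_inv.eq, hψ, hx.eq]

theorem stmt_11_general (I : Set ℝ)
    (U : Subgroup (Equiv.Perm I))
    (hmono : ∀ φ ∈ U, StrictMono (⇑φ))
    (htrans : ∀ x y : I, ∃ φ ∈ U, φ x = y)
    (hfree : ∀ φ ∈ ⁅U, U⁆, φ ≠ 1 → ∀ x : I, φ x ≠ x)
    (hfin : ∀ φ ∈ U, φ ≠ 1 → {x : I | φ x = x}.Finite) :
    ∀ φ ∈ U, φ ≠ 1 → ∀ x y : I, φ x = x → φ y = y → x = y := by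
  intro φ hφU hφne x y hx hy
  obtain ⟨ψ, hψU, hψ⟩ := htrans y x
  have hcomm : Commute φ ψ := by
    rw [← commutatorElement_eq_one_iff_commute]
    by_contra hne
    exact hfree _ (Subgroup.commutator_mem_commutator hφU hψU) hne x
      (Equiv.Perm.commutatorElement_apply_eq_of_isFixedPt hx hy hψ)
  have hmaps : MapsTo ψ (fixedPoints φ) (fixedPoints φ) :=
    Semiconj.mapsTo_fixedPoints fun z => (DFunLike.congr_fun hcomm.eq z).symm
  rw [← hψ]
  exact (hmono ψ hψU).apply_eq_self_of_mapsTo_of_finite (hfin φ hφU hφne) hmaps hy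

/-- If `I` is an open interval of reals (open, order-connected, nonempty subset of `ℝ`) and
`U ≤ Homeo⁺(I)` (modelled as a subgroup of `Equiv.Perm I` of strictly monotone permutations)
acts transitively on `I`, its commutator subgroup `⁅U,U⁆` acts freely on `I`, and each
non-identity member of `U` has only finitely many fixed points, then each non-identity
member of `U` has at most one fixed point. -/
theorem stmt_11 (I : Set ℝ) (hIopen : IsOpen I) (hIconn : I.OrdConnected) (hIne : I.Nonempty)
    (U : Subgroup (Equiv.Perm I))
    (hmono : ∀ φ ∈ U, StrictMono (⇑φ))
    (htrans : ∀ x y : I, ∃ φ ∈ U, φ x = y)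
    (hfree : ∀ φ ∈ ⁅U, U⁆, φ ≠ 1 → ∀ x : I, φ x ≠ x)
    (hfin : ∀ φ ∈ U, φ ≠ 1 → {x : I | φ x = x}.Finite) :
    ∀ φ ∈ U, φ ≠ 1 → ∀ x y : I, φ x = x → φ y = y → x = y :=
  stmt_11_general I U hmono htrans hfree hfin
end

section
/- Suppose U is a set of increasing homeomorphisms of ℝ and ∼ is an equivalence relation on ℝ such that: (1) no ∼-equivalence class has full Lebesgue measure (i.e., for each class C, ℝ∖C does not have measure zero); and (2) for every (x,y) ∈ ℝ² there exists φ ∈ U with φ(x) = y and z ∼ φ(z) for all z ≠ x. Then, letting S = ℝ/∼, there is no U-anonymous good weak S-predictor; in fact, the function x ↦ [x]∼ witnesses the failure of goodness of every U-anonymous weak S-predictor. -/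
open MeasureTheory Set

/-- **Blocking lemma.**  Suppose `U` is a set of increasing homeomorphisms of `ℝ`
(strictly monotone bijections) and `∼` is an equivalence relation on `ℝ` such that
(1) no `∼`-class has full measure, and (2) for every `x, y` there is `φ ∈ U` with
`φ x = y` and `z ∼ φ z` for all `z ≠ x`.  Then, with `S = ℝ/∼`, there is no
`U`-anonymous good weak `S`-predictor; in fact `x ↦ [x]∼` witnesses the failure of
goodness of every `U`-anonymous weak `S`-predictor.  A weak predictor is encoded as
`P : ℝ → (ℝ → S) → S`, where `P x F` stands for the prediction from `F↾(ℝ \ {x})`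
(so `P x` depends only on those values), and anonymity reads `P a (F ∘ φ) = P (φ a) F`. -/
theorem stmt_13 (U : Set (ℝ → ℝ))
    (hU : ∀ φ ∈ U, Function.Bijective φ ∧ StrictMono φ)
    (r : Setoid ℝ)
    (hclass : ∀ x : ℝ, ¬ volume {z : ℝ | ¬ r.r z x} = 0)
    (hpath : ∀ x y : ℝ, ∃ φ ∈ U, φ x = y ∧ ∀ z : ℝ, z ≠ x → r.r z (φ z)) :
    (¬ ∃ P : ℝ → (ℝ → Quotient r) → Quotient r,
        (∀ (x : ℝ) (F G : ℝ → Quotient r), (∀ z : ℝ, z ≠ x → F z = G z) → P x F = P x G) ∧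
        (∀ φ ∈ U, ∀ (a : ℝ) (F : ℝ → Quotient r), P a (F ∘ φ) = P (φ a) F) ∧
        (∀ F : ℝ → Quotient r, volume {x : ℝ | P x F ≠ F x} = 0)) ∧
    (∀ P : ℝ → (ℝ → Quotient r) → Quotient r,
        (∀ (x : ℝ) (F G : ℝ → Quotient r), (∀ z : ℝ, z ≠ x → F z = G z) → P x F = P x G) →
        (∀ φ ∈ U, ∀ (a : ℝ) (F : ℝ → Quotient r), P a (F ∘ φ) = P (φ a) F) →
        ¬ volume {x : ℝ | P x (fun z => Quotient.mk r z) ≠ Quotient.mk r x} = 0) := by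
  have key : ∀ P : ℝ → (ℝ → Quotient r) → Quotient r,
      (∀ (x : ℝ) (F G : ℝ → Quotient r), (∀ z : ℝ, z ≠ x → F z = G z) → P x F = P x G) →
      (∀ φ ∈ U, ∀ (a : ℝ) (F : ℝ → Quotient r), P a (F ∘ φ) = P (φ a) F) →
      ¬ volume {x : ℝ | P x (fun z => Quotient.mk r z) ≠ Quotient.mk r x} = 0 := by
    intro P hloc hanon hvol
    set F : ℝ → Quotient r := fun z => Quotient.mk r z with hF
    have hconst : ∀ x y : ℝ, P x F = P y F := by
      intro x y
      obtain ⟨φ, hφU, hφx, hφr⟩ := hpath x y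
      have h1 : P x (F ∘ φ) = P x F := by
        apply hloc
        intro z hz
        simp only [Function.comp, hF]
        exact (Quotient.sound (hφr z hz)).symm
      have h2 := hanon φ hφU x F
      rw [h1, hφx] at h2
      exact h2
    obtain ⟨x₀⟩ := (P 0 F).exists_rep
    rename_i hx₀
    have heq : {x : ℝ | P x F ≠ F x} = {z : ℝ | ¬ r.r z x₀} := by
      ext z
      simp only [mem_setOf_eq]
      constructor
      · intro h hr
        apply h
        rw [hconst z 0, ← hx₀, hF]
        exact (Quotient.sound hr).symm
      · intro h hPF
        apply h
        have : Quotient.mk r x₀ = Quotient.mk r z := by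
          rw [hx₀, hconst 0 z]; exact hPF
        exact r.symm (Quotient.exact this)
    rw [heq] at hvol
    exact hclass x₀ hvol
  constructor
  · rintro ⟨P, hloc, hanon, hgood⟩
    exact key P hloc hanon (hgood _)
  · exact key
end

section
/- Suppose U is a set of increasing homeomorphisms of ℝ and 𝓕 is a countable set of injective partial functions from ℝ to ℝ such that for every (x,y) ∈ ℝ² there is φ ∈ U with φ(x) = y and such that for every z ≠ x there is f ∈ 𝓕 with z in the domain of f and φ(z) = f(z). Let ∼ be the equivalence relation on ℝ generated by the relation R = {(u,v) : f(u) = v for some f ∈ 𝓕}. Then there is no good weak U-anonymous ℝ/∼-predictor. -/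
/-!
Feeding the predictor the quotient map `F z = [z]`: the hypothesis on `U` gives, for any `x, y`,
some `φ ∈ U` with `φ x = y` and `F ∘ φ = F` off `x`, so anonymity makes `x ↦ P x F` a constant
`c`. Each `∼`-class is countable (a countable union of injective partial functions generates
countable orbits), so `F = c` only on a null set, while goodness says `F = c` almost everywhere.
-/

open MeasureTheory Set

section CountableOrbits

variable {α : Type*}

theorem Relation.countable_setOf_eqvGen {R : α → α → Prop}
    (hfwd : ∀ a, {b | R a b}.Countable) (hbwd : ∀ b, {a | R a b}.Countable) (a : α) :
    {b | Relation.EqvGen R a b}.Countable := by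
  set step : Set α → Set α := fun S => ⋃ u ∈ S, ({v | R u v} ∪ {v | R v u})
  set C : Set α := ⋃ n, step^[n] {a}
  have hC : C.Countable := countable_iUnion fun n => by
    induction n with
    | zero => exact countable_singleton a
    | succ n ih =>
      rw [Function.iterate_succ_apply']
      exact ih.biUnion fun u _ => (hfwd u).union (hbwd u)
  have hstep : ∀ u ∈ C, ∀ v, R u v ∨ R v u → v ∈ C := by
    rintro u ⟨_, ⟨n, rfl⟩, hu⟩ v huv
    refine mem_iUnion.mpr ⟨n + 1, ?_⟩
    rw [Function.iterate_succ_apply']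
    exact mem_biUnion hu huv
  have hclosed : ∀ u v, R u v → (u ∈ C ↔ v ∈ C) := fun u v huv =>
    ⟨fun hu => hstep u hu v (.inl huv), fun hv => hstep v hv u (.inr huv)⟩
  -- `u ∈ C ↔ v ∈ C` is an equivalence relation containing `R`, hence containing `EqvGen R`.
  refine hC.mono fun b hab => ?_
  have hequiv : Equivalence fun u v => (u ∈ C ↔ v ∈ C) := ⟨fun _ => .rfl, Iff.symm, Iff.trans⟩
  have hiff : a ∈ C ↔ b ∈ C := hequiv.eqvGen_iff.mp (hab.mono hclosed)
  exact hiff.mp (mem_iUnion.mpr ⟨0, rfl⟩)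

theorem PFun.countable_setOf_exists_mem {β : Type*} {𝓕 : Set (α →. β)} (h𝓕 : 𝓕.Countable)
    (a : α) : {b | ∃ f ∈ 𝓕, b ∈ f a}.Countable := by
  have hsub : ∀ f : α →. β, {b | b ∈ f a}.Subsingleton := fun f _ hb _ hc => Part.mem_unique hb hc
  refine (h𝓕.biUnion fun f _ => (hsub f).countable).mono ?_
  rintro b ⟨f, hf, hb⟩
  exact mem_biUnion hf hb

theorem PFun.countable_setOf_exists_mem_of_injective {β : Type*} {𝓕 : Set (α →. β)}
    (h𝓕 : 𝓕.Countable) (hinj : ∀ f ∈ 𝓕, ∀ a a' b, b ∈ f a → b ∈ f a' → a = a') (b : β) :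
    {a | ∃ f ∈ 𝓕, b ∈ f a}.Countable := by
  have hsub : ∀ f ∈ 𝓕, {a | b ∈ f a}.Subsingleton := fun f hf _ ha _ ha' => hinj f hf _ _ b ha ha'
  refine (h𝓕.biUnion fun f hf => (hsub f hf).countable).mono ?_
  rintro a ⟨f, hf, ha⟩
  exact mem_biUnion hf ha

end CountableOrbits

theorem predict_eq_of_forall_exists_invariant {α S : Type*} {U : Set (α → α)}
    {P : α → (α → S) → S}
    (hweak : ∀ x (F G : α → S), (∀ z, z ≠ x → F z = G z) → P x F = P x G)
    (hanon : ∀ φ ∈ U, ∀ a (F : α → S), P a (F ∘ φ) = P (φ a) F) {F : α → S}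
    (hF : ∀ x y, ∃ φ ∈ U, φ x = y ∧ ∀ z, z ≠ x → F (φ z) = F z) (x y : α) :
    P x F = P y F := by
  obtain ⟨φ, hφU, rfl, hφ⟩ := hF x y
  rw [← hanon φ hφU, hweak x (F ∘ φ) F hφ]

theorem measure_setOf_ne_ne_zero_of_countable_fibers {α S : Type*} [MeasurableSpace α]
    (μ : Measure α) [NullSingletonClass μ] [NeZero μ] {F : α → S}
    (hF : ∀ c, (F ⁻¹' {c}).Countable) (c : S) : μ {x | c ≠ F x} ≠ 0 := by
  intro h
  have huniv : F ⁻¹' {c} ∪ {x | c ≠ F x} = univ :=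
    eq_univ_of_forall fun x => (eq_or_ne (F x) c).imp id Ne.symm
  exact NeZero.ne μ (Measure.measure_univ_eq_zero.mp
    (huniv ▸ measure_union_null ((hF c).measure_zero μ) h))

theorem stmt_14_general (U : Set (ℝ → ℝ))
    (𝓕 : Set (ℝ →. ℝ)) (hcount : 𝓕.Countable)
    (hinj : ∀ f ∈ 𝓕, ∀ a b c : ℝ, c ∈ f a → c ∈ f b → a = b)
    (hpath : ∀ x y : ℝ, ∃ φ ∈ U, φ x = y ∧ ∀ z : ℝ, z ≠ x → ∃ f ∈ 𝓕, φ z ∈ f z)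
    (r : Setoid ℝ)
    (hr : ∀ a b : ℝ, r.r a b ↔ Relation.EqvGen (fun u v : ℝ => ∃ f ∈ 𝓕, v ∈ f u) a b) :
    ¬ ∃ P : ℝ → (ℝ → Quotient r) → Quotient r,
        (∀ (x : ℝ) (F G : ℝ → Quotient r), (∀ z : ℝ, z ≠ x → F z = G z) → P x F = P x G) ∧
        (∀ φ ∈ U, ∀ (a : ℝ) (F : ℝ → Quotient r), P a (F ∘ φ) = P (φ a) F) ∧
        (∀ F : ℝ → Quotient r, volume {x : ℝ | P x F ≠ F x} = 0) := by
  rintro ⟨P, hweak, hanon, hgood⟩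
  have hinvariant : ∀ x y, ∃ φ ∈ U, φ x = y ∧ ∀ z, z ≠ x → ⟦φ z⟧ = (⟦z⟧ : Quotient r) := by
    intro x y
    obtain ⟨φ, hφU, hφx, hφ⟩ := hpath x y
    refine ⟨φ, hφU, hφx, fun z hz => Quotient.sound ?_⟩
    obtain ⟨f, hf, hfz⟩ := hφ z hz
    exact (hr _ _).mpr (.symm _ _ (.rel _ _ ⟨f, hf, hfz⟩))
  have hconst := predict_eq_of_forall_exists_invariant hweak hanon hinvariant
  have hfibers : ∀ c : Quotient r, (Quotient.mk r ⁻¹' {c}).Countable := by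
    refine Quotient.ind fun a => ?_
    refine (Relation.countable_setOf_eqvGen (PFun.countable_setOf_exists_mem hcount)
      (PFun.countable_setOf_exists_mem_of_injective hcount hinj) a).mono fun b hb => ?_
    exact (hr a b).mp (Quotient.exact (Eq.symm hb))
  refine measure_setOf_ne_ne_zero_of_countable_fibers volume hfibers (P 0 (Quotient.mk r)) ?_
  simpa only [hconst _ 0] using hgood (Quotient.mk r)

/-- Suppose `U` is a set of increasing homeomorphisms of `ℝ` (strictly monotone bijections)
and `𝓕` is a countable set of injective partial functions `ℝ →. ℝ` such that for every
`(x, y)` there is `φ ∈ U` with `φ x = y` and, for every `z ≠ x`, some `f ∈ 𝓕` defined at `z`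
with `φ z = f z`.  Let `∼` be the equivalence relation generated by
`R = {(u, v) : f u = v for some f ∈ 𝓕}`.  Then there is no good, weak, `U`-anonymous
`ℝ/∼`-predictor.  A weak predictor is encoded as `P : ℝ → (ℝ → S) → S`, where `P x F`
stands for the prediction from `F↾(ℝ \ {x})` (so `P x` depends only on those values), and
anonymity reads `P a (F ∘ φ) = P (φ a) F`. -/
theorem stmt_14 (U : Set (ℝ → ℝ))
    (hU : ∀ φ ∈ U, Function.Bijective φ ∧ StrictMono φ)
    (𝓕 : Set (ℝ →. ℝ)) (hcount : 𝓕.Countable)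
    (hinj : ∀ f ∈ 𝓕, ∀ a b c : ℝ, c ∈ f a → c ∈ f b → a = b)
    (hpath : ∀ x y : ℝ, ∃ φ ∈ U, φ x = y ∧ ∀ z : ℝ, z ≠ x → ∃ f ∈ 𝓕, φ z ∈ f z)
    (r : Setoid ℝ)
    (hr : ∀ a b : ℝ, r.r a b ↔ Relation.EqvGen (fun u v : ℝ => ∃ f ∈ 𝓕, v ∈ f u) a b) :
    ¬ ∃ P : ℝ → (ℝ → Quotient r) → Quotient r,
        (∀ (x : ℝ) (F G : ℝ → Quotient r), (∀ z : ℝ, z ≠ x → F z = G z) → P x F = P x G) ∧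
        (∀ φ ∈ U, ∀ (a : ℝ) (F : ℝ → Quotient r), P a (F ∘ φ) = P (φ a) F) ∧
        (∀ F : ℝ → Quotient r, volume {x : ℝ | P x F ≠ F x} = 0) :=
  stmt_14_general U 𝓕 hcount hinj hpath r hr
end

section
/- For every point P = (w,z) ∈ ℝ² there exist sequences (pₙ), (qₙ) of rational numbers and (γₙ) of positive rational numbers such that: (pₙ) and (qₙ) are strictly increasing and converge to w and z respectively; setting Δₙ = pₙ₊₁ − pₙ, one has 0 < Δₙ < 1 and qₙ₊₁ = qₙ + Δₙ(1 + γₙ) for all n; and γₙ/(Δₙ)^{n−1} → 0 as n → ∞. -/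
open Filter

private lemma seq_rec' {α : Type*} (P : ℕ → α → Prop) (R : ℕ → α → α → Prop) (a0 : α)
    (h0 : P 0 a0) (hstep : ∀ n a, P n a → ∃ b, P (n+1) b ∧ R n a b) :
    ∃ f : ℕ → α, f 0 = a0 ∧ (∀ n, P n (f n)) ∧ ∀ n, R n (f n) (f (n+1)) := by
  choose! g hg1 hg2 using hstep
  refine ⟨fun n => Nat.rec a0 (fun n c => g n c) n, rfl, ?_⟩
  have hP : ∀ n, P n (Nat.rec a0 (fun n c => g n c) n) := by
    intro n; induction n with
    | zero => exact h0
    | succ n ih => exact hg1 n _ ih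
  exact ⟨hP, fun n => hg2 n _ (hP n)⟩

/-- For every point `(w, z) ∈ ℝ²` there are sequences `(pₙ)`, `(qₙ)` of rationals and `(γₙ)`
of positive rationals such that `(pₙ)`, `(qₙ)` are strictly increasing and converge to `w`
and `z` respectively; with `Δₙ = pₙ₊₁ − pₙ` one has `0 < Δₙ < 1` and
`qₙ₊₁ = qₙ + Δₙ(1 + γₙ)` for all `n`; and `γₙ/Δₙ^(n−1) → 0` (here `n - 1` is truncated
subtraction on `ℕ`, matching the paper's indexing from `n = 1`). -/
theorem stmt_15 (w z : ℝ) :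
    ∃ p q γ : ℕ → ℚ,
      StrictMono p ∧ StrictMono q ∧
      Tendsto (fun n => (p n : ℝ)) atTop (nhds w) ∧
      Tendsto (fun n => (q n : ℝ)) atTop (nhds z) ∧
      (∀ n : ℕ, 0 < γ n) ∧
      (∀ n : ℕ, 0 < p (n + 1) - p n ∧ p (n + 1) - p n < 1) ∧
      (∀ n : ℕ, q (n + 1) = q n + (p (n + 1) - p n) * (1 + γ n)) ∧
      Tendsto (fun n : ℕ => ((γ n / (p (n + 1) - p n) ^ (n - 1) : ℚ) : ℝ))
        atTop (nhds 0) := by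
  have hpow : ∀ m : ℕ, (0:ℝ) < (1/2)^m := fun m => pow_pos (by norm_num) m
  -- choose p
  have hpex : ∀ n : ℕ, ∃ r : ℚ, w - (1/2)^n < (r:ℝ) ∧ (r:ℝ) < w - (3/4)*(1/2)^n := by
    intro n
    exact exists_rat_btwn (by nlinarith [hpow n])
  choose p hp1 hp2 using hpex
  have hΔlo : ∀ n, (1/2:ℝ)^(n+2) < (p (n+1) : ℝ) - p n := by
    intro n
    have h1 := hp1 (n+1); have h2 := hp2 n
    have e1 : (1/2:ℝ)^(n+1) = (1/2)*(1/2)^n := by rw [pow_succ]; ring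
    have e2 : (1/2:ℝ)^(n+2) = (1/4)*(1/2)^n := by rw [pow_succ, pow_succ]; ring
    nlinarith [hpow n]
  have hΔhi : ∀ n, (p (n+1) : ℝ) - p n < (1/2)^n := by
    intro n
    have h1 := hp2 (n+1); have h2 := hp1 n
    have e1 : (1/2:ℝ)^(n+1) = (1/2)*(1/2)^n := by rw [pow_succ]; ring
    nlinarith [hpow n]
  -- key step for q
  have key : ∀ (n : ℕ) (c : ℚ), (z - (1/2:ℝ)^(n*(n+3)) < (c:ℝ) + w - p n ∧ (c:ℝ) + w - p n < z) →
      ∃ d : ℚ, (z - (1/2:ℝ)^((n+1)*((n+1)+3)) < (d:ℝ) + w - p (n+1) ∧ (d:ℝ) + w - p (n+1) < z) ∧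
        (0 < d - c - (p (n+1) - p n) ∧
         ((d - c - (p (n+1) - p n) : ℚ) : ℝ) < (1/2)^(n*(n+3))) := by
    intro n c ⟨h1, h2⟩
    set x : ℝ := (c:ℝ) + w - p n with hx
    have hmax : ((c + (p (n+1) - p n) : ℚ):ℝ) + max 0 (z - (1/2)^((n+1)*((n+1)+3)) - x)
        < ((c + (p (n+1) - p n):ℚ):ℝ) + (z - x) := by
      have : max 0 (z - (1/2)^((n+1)*((n+1)+3)) - x) < z - x := by
        apply max_lt (by linarith) (by linarith [hpow ((n+1)*((n+1)+3))])
      linarith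
    obtain ⟨d, hd1, hd2⟩ := exists_rat_btwn hmax
    have hc1 : ((c + (p (n+1) - p n) : ℚ):ℝ) = (c:ℝ) + ((p (n+1):ℝ) - p n) := by push_cast; ring
    rw [hc1] at hd1 hd2
    have ht0 : (0:ℝ) < (d:ℝ) - c - ((p (n+1):ℝ) - p n) := by
      have := le_max_left (0:ℝ) (z - (1/2)^((n+1)*((n+1)+3)) - x)
      linarith
    have htl : z - (1/2)^((n+1)*((n+1)+3)) - x < (d:ℝ) - c - ((p (n+1):ℝ) - p n) := by
      have := le_max_right (0:ℝ) (z - (1/2)^((n+1)*((n+1)+3)) - x)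
      linarith
    have hth : (d:ℝ) - c - ((p (n+1):ℝ) - p n) < z - x := by linarith
    refine ⟨d, ⟨by simp only [hx] at htl ⊢; linarith, by simp only [hx] at hth ⊢; linarith⟩,
      ?_, ?_⟩
    · have hh : (0:ℝ) < ((d - c - (p (n+1) - p n) : ℚ):ℝ) := by push_cast; linarith
      exact_mod_cast hh
    · push_cast; simp only [hx] at hth h1; linarith
  -- initial value
  obtain ⟨c0, hc01, hc02⟩ := exists_rat_btwn (show z - 1 - w + (p 0:ℝ) < z - w + p 0 by linarith)
  obtain ⟨q, hq0, hqP, hqR⟩ := seq_rec'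
    (fun (n:ℕ) (c:ℚ) => z - (1/2:ℝ)^(n*(n+3)) < (c:ℝ) + w - p n ∧ (c:ℝ) + w - p n < z)
    (fun (n:ℕ) (c d:ℚ) => 0 < d - c - (p (n+1) - p n) ∧
         ((d - c - (p (n+1) - p n) : ℚ) : ℝ) < (1/2)^(n*(n+3)))
    c0 (by norm_num; constructor <;> linarith) key
  -- basic facts
  have hΔq : ∀ n, 0 < p (n+1) - p n := by
    intro n
    have hh : (0:ℝ) < ((p (n+1) - p n : ℚ):ℝ) := by
      push_cast; linarith [hΔlo n, hpow (n+2)]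
    exact_mod_cast hh
  have hΔq1 : ∀ n, p (n+1) - p n < 1 := by
    intro n
    have hh : ((p (n+1) - p n : ℚ):ℝ) < 1 := by
      push_cast
      have : (1/2:ℝ)^n ≤ 1 := pow_le_one₀ (by norm_num) (by norm_num)
      linarith [hΔhi n]
    exact_mod_cast hh
  set t : ℕ → ℚ := fun n => q (n+1) - q n - (p (n+1) - p n) with ht
  have ht0 : ∀ n, 0 < t n := fun n => (hqR n).1
  have htlt : ∀ n, ((t n : ℚ):ℝ) < (1/2)^(n*(n+3)) := fun n => (hqR n).2
  refine ⟨p, q, fun n => t n / (p (n+1) - p n), ?_, ?_, ?_, ?_, ?_, ?_, ?_, ?_⟩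
  · -- StrictMono p
    apply strictMono_nat_of_lt_succ
    intro n
    linarith [hΔq n]
  · -- StrictMono q
    apply strictMono_nat_of_lt_succ
    intro n
    have := ht0 n
    have := hΔq n
    simp only [ht] at *
    linarith
  · -- p → w
    have h2n : Tendsto (fun n:ℕ => (1/2:ℝ)^n) atTop (nhds 0) :=
      tendsto_pow_atTop_nhds_zero_of_lt_one (by norm_num) (by norm_num)
    apply tendsto_of_tendsto_of_tendsto_of_le_of_le
      (g := fun n:ℕ => w - (1/2:ℝ)^n) (h := fun _ => w)
    · simpa using tendsto_const_nhds.sub h2n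
    · exact tendsto_const_nhds
    · exact fun n => le_of_lt (hp1 n)
    · intro n
      have := hp2 n
      have := hpow n
      linarith
  · -- q → z
    have h2n : Tendsto (fun n:ℕ => (1/2:ℝ)^n) atTop (nhds 0) :=
      tendsto_pow_atTop_nhds_zero_of_lt_one (by norm_num) (by norm_num)
    have hxz : Tendsto (fun n => (q n:ℝ) + w - p n) atTop (nhds z) := by
      apply tendsto_of_tendsto_of_tendsto_of_le_of_le
        (g := fun n:ℕ => z - (1/2:ℝ)^n) (h := fun _ => z)
      · simpa using tendsto_const_nhds.sub h2n
      · exact tendsto_const_nhds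
      · intro n
        have heps : (1/2:ℝ)^(n*(n+3)) ≤ (1/2)^n :=
          pow_le_pow_of_le_one (by norm_num) (by norm_num) (by nlinarith)
        linarith [(hqP n).1]
      · exact fun n => le_of_lt (hqP n).2
    have hptend : Tendsto (fun n => (p n:ℝ) - w) atTop (nhds 0) := by
      have h2n' : Tendsto (fun n:ℕ => (1/2:ℝ)^n) atTop (nhds 0) := h2n
      apply tendsto_of_tendsto_of_tendsto_of_le_of_le
        (g := fun n:ℕ => -(1/2:ℝ)^n) (h := fun _:ℕ => (0:ℝ))
      · simpa using h2n.neg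
      · exact tendsto_const_nhds
      · intro n; simp only; linarith [hp1 n]
      · intro n; simp only; have := hp2 n; have := hpow n; linarith
    have : Tendsto (fun n => ((q n:ℝ) + w - p n) + ((p n:ℝ) - w)) atTop (nhds (z + 0)) :=
      hxz.add hptend
    simpa using this
  · -- γ > 0
    intro n
    exact div_pos (ht0 n) (hΔq n)
  · -- Δ bounds
    exact fun n => ⟨hΔq n, hΔq1 n⟩
  · -- recurrence
    intro n
    have hne : p (n+1) - p n ≠ 0 := ne_of_gt (hΔq n)
    field_simp
    simp only [ht]
    ring
  · -- γ/Δ^(n-1) → 0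
    have h2n : Tendsto (fun n:ℕ => (1/2:ℝ)^n) atTop (nhds 0) :=
      tendsto_pow_atTop_nhds_zero_of_lt_one (by norm_num) (by norm_num)
    apply tendsto_of_tendsto_of_tendsto_of_le_of_le' tendsto_const_nhds h2n
    · -- 0 ≤ value
      filter_upwards with n
      have h1 : (0:ℚ) < t n / (p (n+1) - p n) / (p (n+1) - p n)^(n-1) :=
        div_pos (div_pos (ht0 n) (hΔq n)) (pow_pos (hΔq n) _)
      have : (0:ℝ) < ((t n / (p (n+1) - p n) / (p (n+1) - p n)^(n-1) : ℚ):ℝ) := by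
        exact_mod_cast h1
      linarith
    · -- value ≤ (1/2)^n eventually
      filter_upwards [eventually_ge_atTop 1] with n hn
      have hΔr0 : (0:ℝ) < ((p (n+1) - p n : ℚ):ℝ) := by exact_mod_cast hΔq n
      have hred : t n / (p (n+1) - p n) / (p (n+1) - p n)^(n-1)
          = t n / (p (n+1) - p n)^n := by
        rw [div_div, ← pow_succ']
        congr 2
        omega
      rw [hred]
      have hcast : ((t n / (p (n+1) - p n)^n : ℚ):ℝ)
          = ((t n:ℚ):ℝ) / (((p (n+1) - p n:ℚ):ℝ))^n := by push_cast; ring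
      rw [hcast]
      have hΔΔ : ((1/2:ℝ)^(n+2))^n ≤ (((p (n+1) - p n:ℚ):ℝ))^n := by
        apply pow_le_pow_left₀ (le_of_lt (hpow (n+2)))
        have : (1/2:ℝ)^(n+2) < ((p (n+1) - p n:ℚ):ℝ) := by push_cast; linarith [hΔlo n]
        linarith
      have hsplit : (1/2:ℝ)^(n*(n+3)) = (1/2)^n * ((1/2:ℝ)^(n+2))^n := by
        rw [← pow_mul, ← pow_add]
        congr 1
        ring
      have hbound : ((t n:ℚ):ℝ) < (1/2:ℝ)^n * (((p (n+1) - p n:ℚ):ℝ))^n := by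
        calc ((t n:ℚ):ℝ) < (1/2:ℝ)^(n*(n+3)) := htlt n
        _ = (1/2)^n * ((1/2:ℝ)^(n+2))^n := hsplit
        _ ≤ (1/2:ℝ)^n * (((p (n+1) - p n:ℚ):ℝ))^n := by
            apply mul_le_mul_of_nonneg_left hΔΔ (le_of_lt (hpow n))
      rw [div_le_iff₀ (pow_pos hΔr0 n)]
      linarith
end
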